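/- With the edge lengths d(u) = 2^{−p₀(u)} and associated tree metric ρ on the set Γ₀ of finite words over {a,b}, for all finite words u,v one has min{ρ(au, av), ρ(bu, bv)} ≤ (3/4)·ρ(u,v), where cw denotes the word w with the letter c prepended. -/
import Mathlib


/-- The prefix of length `n` of the infinite word `z : ℕ → Bool`
(letters `a`/`b` are modeled as the two elements of `Bool`). -/
def prefixWord (z : ℕ → Bool) (n : ℕ) : List Bool := (List.range n).map z

/-- `z` is periodic with period `p ≥ 1`: `z (i + p) = z i` for all `i`. -/
def IsPeriodicWith (z : ℕ → Bool) (p : ℕ) : Prop := 1 ≤ p ∧ ∀ i, z (i + p) = z i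

/-- `z` is a periodic infinite word. -/
def IsPeriodicWord (z : ℕ → Bool) : Prop := ∃ p, IsPeriodicWith z p

/-- The minimal period of `z` (junk value `0` if `z` is not periodic). -/
noncomputable def minPeriod (z : ℕ → Bool) : ℕ := sInf {p | IsPeriodicWith z p}

/-- The finite word `v` occurs in `z` as a contiguous segment starting at position `n`. -/
def OccursAt (v : List Bool) (z : ℕ → Bool) (n : ℕ) : Prop :=
  ∀ i < v.length, z (n + i) = v.getD i false

/-- The finite word `v` occurs somewhere in `z` as a contiguous segment. -/
def Occurs (v : List Bool) (z : ℕ → Bool) : Prop := ∃ n, OccursAt v z n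

/-- The minimal potential period `p₀ v` of a finite word `v`: the minimum, over all
periodic infinite words `z` in which `v` occurs, of the minimal period of `z`;
`p₀` of the empty word is `0`. -/
noncomputable def p0 (v : List Bool) : ℕ :=
  if v = [] then 0
  else sInf {p | ∃ z : ℕ → Bool, IsPeriodicWord z ∧ Occurs v z ∧ minPeriod z = p}

/-- The `d`-length of a finite word: the sum of the lengths `d (w|_i)` of the tree
edges along the path from the empty word to `w` (the edge joining a nonempty word `u`
to the word obtained by deleting its last letter has length `d u`). -/
noncomputable def dLength (d : List Bool → ℝ) (w : List Bool) : ℝ :=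
  ∑ i ∈ Finset.range w.length, d (w.take (i + 1))

/-- The longest common prefix of two finite words. -/
def lcp : List Bool → List Bool → List Bool
  | a :: u, b :: v => if a = b then a :: lcp u v else []
  | _, _ => []

/-- The tree metric on finite words induced by the edge lengths `d`:
`ρ(u,v) = l_d(u) + l_d(v) − 2 l_d(u ∧ v)`. -/
noncomputable def treeDist (d : List Bool → ℝ) (u v : List Bool) : ℝ :=
  dLength d u + dLength d v - 2 * dLength d (lcp u v)

/-- The specific edge lengths `d(u) = 2 ^ (−p₀ u)` used in the counterexample. -/
noncomputable def dEdge (u : List Bool) : ℝ := 2 ^ (-(p0 u : ℤ))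

/-- Prepending a finite word `w` to an infinite word `z`. -/
def prependWord (w : List Bool) (z : ℕ → Bool) : ℕ → Bool :=
  fun i => if i < w.length then w.getD i false else z (i - w.length)

-- auxiliary lemmas

lemma lcp_prefix_left : ∀ u v : List Bool, lcp u v <+: u := by
  intro u
  induction u with
  | nil => intro v; cases v <;> simp [lcp]
  | cons a u ih =>
    intro v
    cases v with
    | nil => simp [lcp]
    | cons b v =>
      by_cases h : a = b
      · simp only [lcp, if_pos h]
        exact (List.cons_prefix_cons).mpr ⟨rfl, ih v⟩
      · simp [lcp, h]

lemma lcp_prefix_right : ∀ u v : List Bool, lcp u v <+: v := by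
  intro u
  induction u with
  | nil => intro v; cases v <;> simp [lcp]
  | cons a u ih =>
    intro v
    cases v with
    | nil => simp [lcp]
    | cons b v =>
      by_cases h : a = b
      · simp only [lcp, if_pos h]
        subst h
        exact (List.cons_prefix_cons).mpr ⟨rfl, ih v⟩
      · simp [lcp, h]

lemma lcp_cons (c : Bool) (u v : List Bool) : lcp (c :: u) (c :: v) = c :: lcp u v := by
  simp [lcp]

lemma exists_periodic_occurs (w : List Bool) :
    ∃ z, IsPeriodicWord z ∧ Occurs w z := by
  refine ⟨fun i => w.getD (i % (w.length + 1)) false,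
    ⟨w.length + 1, Nat.le_add_left _ _, fun i => by simp [Nat.add_mod_right]⟩, 0, ?_⟩
  intro i hi
  have hm : i % (w.length + 1) = i := Nat.mod_eq_of_lt (by omega)
  simp [hm]

lemma p0_spec {w : List Bool} (hw : w ≠ []) :
    ∃ z, IsPeriodicWord z ∧ Occurs w z ∧ minPeriod z = p0 w := by
  have hne : {p | ∃ z : ℕ → Bool, IsPeriodicWord z ∧ Occurs w z ∧ minPeriod z = p}.Nonempty := by
    obtain ⟨z, hz, ho⟩ := exists_periodic_occurs w
    exact ⟨minPeriod z, z, hz, ho, rfl⟩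
  rw [p0, if_neg hw]
  exact Nat.sInf_mem hne

lemma p0_le {w : List Bool} {z : ℕ → Bool} (hz : IsPeriodicWord z) (ho : Occurs w z) :
    p0 w ≤ minPeriod z := by
  rcases eq_or_ne w [] with h | h
  · simp [p0, h]
  · rw [p0, if_neg h]; exact Nat.sInf_le ⟨z, hz, ho, rfl⟩

lemma minPeriod_isPeriodic {z : ℕ → Bool} (hz : IsPeriodicWord z) :
    IsPeriodicWith z (minPeriod z) := Nat.sInf_mem hz

lemma p0_le_length {w : List Bool} (hw : w ≠ []) : p0 w ≤ w.length := by
  have hl : 1 ≤ w.length := List.length_pos_iff.mpr hw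
  have hper : IsPeriodicWith (fun i => w.getD (i % w.length) false) w.length :=
    ⟨hl, fun i => by simp [Nat.add_mod_right]⟩
  have hocc : Occurs w (fun i => w.getD (i % w.length) false) :=
    ⟨0, fun i hi => by simp [Nat.mod_eq_of_lt hi]⟩
  calc p0 w ≤ minPeriod (fun i => w.getD (i % w.length) false) := p0_le ⟨_, hper⟩ hocc
    _ ≤ w.length := Nat.sInf_le hper

lemma one_le_p0 {w : List Bool} (hw : w ≠ []) : 1 ≤ p0 w := by
  obtain ⟨z, hz, _, hmp⟩ := p0_spec hw
  have h := minPeriod_isPeriodic hz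
  rw [hmp] at h
  exact h.1

lemma p0_le_p0_cons (c : Bool) (w : List Bool) : p0 w ≤ p0 (c :: w) := by
  obtain ⟨z, hz, ⟨n, ho⟩, hmp⟩ := p0_spec (List.cons_ne_nil c w)
  have hw : Occurs w z := by
    refine ⟨n + 1, fun i hi => ?_⟩
    have h := ho (i + 1) (by simp; omega)
    have he : n + 1 + i = n + (i + 1) := by omega
    rw [he, h]
    simp
  rw [← hmp]
  exact p0_le hz hw

lemma p0_cons_of_ne {w : List Bool} (hw : w ≠ []) {c : Bool}
    (hc : c ≠ w.getD (p0 w - 1) false) : p0 w + 1 ≤ p0 (c :: w) := by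
  have hle := p0_le_p0_cons c w
  rcases lt_or_eq_of_le hle with h | h
  · omega
  · exfalso
    obtain ⟨z, hz, ⟨n, ho⟩, hmp⟩ := p0_spec (List.cons_ne_nil c w)
    have hper : IsPeriodicWith z (minPeriod z) := minPeriod_isPeriodic hz
    rw [hmp, ← h] at hper
    have h1 : 1 ≤ p0 w := one_le_p0 hw
    have hlen : p0 w ≤ w.length := p0_le_length hw
    have hc0 : z n = c := by simpa using ho 0 (by simp)
    obtain ⟨q, hq⟩ : ∃ q, p0 w = q + 1 := ⟨p0 w - 1, by omega⟩
    have hcp : z (n + p0 w) = w.getD (p0 w - 1) false := by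
      have h2 := ho (p0 w) (by simp; omega)
      rw [h2, hq]
      simp
    have hpp := hper.2 n
    apply hc
    rw [← hc0, ← hpp, hcp]

lemma dEdge_key (w : List Bool) : dEdge (false :: w) + dEdge (true :: w) ≤ 3 / 2 * dEdge w := by
  have h2 : (1:ℝ) ≤ 2 := one_le_two
  rcases eq_or_ne w [] with rfl | hw
  · have hf : p0 [false] = 1 := le_antisymm (p0_le_length (by simp)) (one_le_p0 (by simp))
    have ht : p0 [true] = 1 := le_antisymm (p0_le_length (by simp)) (one_le_p0 (by simp))
    have hn : p0 ([] : List Bool) = 0 := by simp [p0]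
    rw [dEdge, dEdge, dEdge, hf, ht, hn]
    norm_num
  · set c : Bool := w.getD (p0 w - 1) false with hcdef
    have hkey1 : ∀ b : Bool, dEdge (b :: w) ≤ dEdge w := by
      intro b
      rw [dEdge, dEdge]
      apply zpow_le_zpow_right₀ h2
      have := p0_le_p0_cons b w
      omega
    have hkey2 : ∀ b : Bool, b ≠ c → dEdge (b :: w) ≤ dEdge w / 2 := by
      intro b hb
      have hp := p0_cons_of_ne hw hb
      rw [dEdge, dEdge]
      have : (2:ℝ) ^ (-(p0 (b :: w) : ℤ)) ≤ 2 ^ (-((p0 w : ℤ) + 1)) := by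
        apply zpow_le_zpow_right₀ h2
        omega
      calc (2:ℝ) ^ (-(p0 (b :: w) : ℤ)) ≤ 2 ^ (-((p0 w : ℤ) + 1)) := this
        _ = 2 ^ (-(p0 w : ℤ)) / 2 := by
            rw [neg_add, zpow_add₀ (two_ne_zero)]
            norm_num
            ring
    cases hc : c with
    | false =>
      have h1 := hkey1 false
      have h2' := hkey2 true (by rw [hc]; simp)
      linarith
    | true =>
      have h1 := hkey1 true
      have h2' := hkey2 false (by rw [hc]; simp)
      linarith

lemma take_eq_of_prefix {m u : List Bool} (h : m <+: u) {i : ℕ} (hi : i ≤ m.length) :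
    m.take i = u.take i := by
  obtain ⟨t, rfl⟩ := h
  rw [List.take_append_of_le_length hi]

lemma dLength_prefix (d : List Bool → ℝ) {m u : List Bool} (h : m <+: u) :
    dLength d u = dLength d m + ∑ i ∈ Finset.Ico m.length u.length, d (u.take (i + 1)) := by
  have hl := h.length_le
  rw [dLength, dLength, ← Finset.sum_range_add_sum_Ico _ hl]
  congr 1
  refine Finset.sum_congr rfl fun i hi => ?_
  rw [take_eq_of_prefix h (by simpa using Finset.mem_range.mp hi)]

lemma dLength_cons (d : List Bool → ℝ) (c : Bool) (w : List Bool) :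
    dLength d (c :: w) = d [c] + dLength (fun t => d (c :: t)) w := by
  rw [dLength, dLength, List.length_cons, Finset.sum_range_succ']
  simp [List.take_succ_cons]
  ring

lemma treeDist_cons (d : List Bool → ℝ) (c : Bool) (u v : List Bool) :
    treeDist d (c :: u) (c :: v) = treeDist (fun t => d (c :: t)) u v := by
  rw [treeDist, treeDist, lcp_cons, dLength_cons, dLength_cons, dLength_cons]
  ring

lemma treeDist_eq (d : List Bool → ℝ) (u v : List Bool) :
    treeDist d u v = (∑ i ∈ Finset.Ico (lcp u v).length u.length, d (u.take (i + 1)))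
      + ∑ i ∈ Finset.Ico (lcp u v).length v.length, d (v.take (i + 1)) := by
  rw [treeDist, dLength_prefix d (lcp_prefix_left u v), dLength_prefix d (lcp_prefix_right u v)]
  ring

/-- The key contractivity estimate: with the edge lengths `d(u) = 2 ^ (−p₀ u)` and
associated tree metric `ρ`, for all finite words `u, v` (over the alphabet `Bool`,
whose two letters are `false` and `true`),
`min (ρ(a·u, a·v)) (ρ(b·u, b·v)) ≤ (3/4) · ρ(u, v)`. -/
theorem treeDist_contractive_pair (u v : List Bool) :
    min (treeDist dEdge (false :: u) (false :: v))
        (treeDist dEdge (true :: u) (true :: v))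
      ≤ (3 / 4) * treeDist dEdge u v := by
  have hU : ∀ (w : List Bool) (s : Finset ℕ),
      ((∑ i ∈ s, dEdge (false :: w.take (i + 1))) + ∑ i ∈ s, dEdge (true :: w.take (i + 1)))
        ≤ 3 / 2 * ∑ i ∈ s, dEdge (w.take (i + 1)) := by
    intro w s
    rw [← Finset.sum_add_distrib, Finset.mul_sum]
    exact Finset.sum_le_sum fun i _ => dEdge_key _
  have hsum : treeDist dEdge (false :: u) (false :: v) + treeDist dEdge (true :: u) (true :: v)
      ≤ 3 / 2 * treeDist dEdge u v := by
    rw [treeDist_cons, treeDist_cons, treeDist_eq, treeDist_eq, treeDist_eq]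
    have h1 := hU u (Finset.Ico (lcp u v).length u.length)
    have h2 := hU v (Finset.Ico (lcp u v).length v.length)
    linarith
  have hmin1 := min_le_left (treeDist dEdge (false :: u) (false :: v))
    (treeDist dEdge (true :: u) (true :: v))
  have hmin2 := min_le_right (treeDist dEdge (false :: u) (false :: v))
    (treeDist dEdge (true :: u) (true :: v))
  linarith
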